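/- Let ≿₁ and ≿₂ be two niveloidal preferences on 𝓕 with utility indices u₁, u₂ and maximal grounded subsets C₁*, B₁* and C₂*, B₂* of 𝒞. Then the following are equivalent: (i) ≿₁ is more ambiguity averse than ≿₂ (i.e., for all f ∈ 𝓕 and x ∈ X, x ≿₂ f implies x ≿₁ f); (ii) u₁ and u₂ are positive affine transformations of each other and, after normalizing so that u₁ = u₂, C₁* ⊆ C₂*; (iii) u₁ and u₂ are positive affine transformations of each other and, after normalizing so that u₁ = u₂, B₁* ⊇ B₂*. -/

import Mathlib

open scoped Pointwise
open MeasureTheory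

namespace Paper

variable {S V : Type*}

/-- An algebra of subsets of `S` (the events `Σ`). -/
structure IsSetAlg (𝓐 : Set (Set S)) : Prop where
  empty_mem : ∅ ∈ 𝓐
  compl_mem : ∀ A ∈ 𝓐, Aᶜ ∈ 𝓐
  union_mem : ∀ A ∈ 𝓐, ∀ B ∈ 𝓐, A ∪ B ∈ 𝓐

/-- `B₀(Σ)`: real-valued `Σ`-measurable simple functions. -/
def IsSimpleFn (𝓐 : Set (Set S)) (φ : S → ℝ) : Prop :=
  (Set.range φ).Finite ∧ ∀ t : ℝ, φ ⁻¹' {t} ∈ 𝓐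

open Classical in
/-- The integral of a simple function with respect to a finitely additive set function. -/
noncomputable def fint (p : Set S → ℝ) (φ : S → ℝ) : ℝ :=
  if h : (Set.range φ).Finite then ∑ t ∈ h.toFinset, t * p (φ ⁻¹' {t}) else 0

/-- `Δ`: the finitely additive probabilities on `Σ` (canonically extended by `0` off `Σ`). -/
def Δset (𝓐 : Set (Set S)) : Set (Set S → ℝ) :=
  {p | p Set.univ = 1 ∧ (∀ A ∈ 𝓐, 0 ≤ p A) ∧
    (∀ A ∈ 𝓐, ∀ B ∈ 𝓐, Disjoint A B → p (A ∪ B) = p A + p B) ∧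
    ∀ A : Set S, A ∉ 𝓐 → p A = 0}

/-- The weak* topology `σ(Δ, B₀(Σ))`, i.e. the topology induced by the evaluation maps
`p ↦ ∫ φ dp`, `φ ∈ B₀(Σ)`. -/
noncomputable def weakStar (𝓐 : Set (Set S)) : TopologicalSpace (Set S → ℝ) :=
  TopologicalSpace.induced
    (fun p => fun φ : {φ : S → ℝ // IsSimpleFn 𝓐 φ} => fint p φ.1)
    Pi.topologicalSpace

/-- `𝒞`: the weak*-lower semicontinuous convex functions `c : Δ → (-∞, ∞]`. -/
def Cscr (𝓐 : Set (Set S)) : Set ((Set S → ℝ) → EReal) :=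
  {c | (∀ p ∈ Δset 𝓐, ⊥ < c p) ∧
    (@LowerSemicontinuousOn (Set S → ℝ) EReal (weakStar 𝓐) _ c (Δset 𝓐)) ∧
    ∀ p ∈ Δset 𝓐, ∀ q ∈ Δset 𝓐, ∀ a b : ℝ, 0 ≤ a → 0 ≤ b → a + b = 1 →
      c (a • p + b • q) ≤ (a : EReal) * c p + (b : EReal) * c q}

/-- A subset `C ⊆ 𝒞` is grounded if `sup_{c ∈ C} min_{p ∈ Δ} c p = 0`. -/
def Grounded (𝓐 : Set (Set S)) (C : Set ((Set S → ℝ) → EReal)) : Prop :=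
  (⨆ c ∈ C, ⨅ p ∈ Δset 𝓐, c p) = 0

/-- `min_{p ∈ Δ} (∫ φ dp + c p)`. -/
noncomputable def minVal (𝓐 : Set (Set S)) (c : (Set S → ℝ) → EReal) (φ : S → ℝ) : EReal :=
  ⨅ p ∈ Δset 𝓐, ((fint p φ : EReal) + c p)

/-- `max_{q ∈ Δ} (∫ φ dq - b q)`. -/
noncomputable def maxVal (𝓐 : Set (Set S)) (b : (Set S → ℝ) → EReal) (φ : S → ℝ) : EReal :=
  ⨆ q ∈ Δset 𝓐, ((fint q φ : EReal) - b q)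

/-- `max_{c ∈ C} min_{p ∈ Δ} (∫ φ dp + c p)`. -/
noncomputable def maxminVal (𝓐 : Set (Set S)) (C : Set ((Set S → ℝ) → EReal))
    (φ : S → ℝ) : EReal :=
  ⨆ c ∈ C, minVal 𝓐 c φ

/-- `min_{b ∈ B} max_{q ∈ Δ} (∫ φ dq - b q)`. -/
noncomputable def minmaxVal (𝓐 : Set (Set S)) (B : Set ((Set S → ℝ) → EReal))
    (φ : S → ℝ) : EReal :=
  ⨅ b ∈ B, maxVal 𝓐 b φ

/-- `min_{p ∈ P} ∫ φ dp`. -/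
noncomputable def minPVal (P : Set (Set S → ℝ)) (φ : S → ℝ) : EReal :=
  ⨅ p ∈ P, (fint p φ : EReal)

/-- `max_{q ∈ Q} ∫ φ dq`. -/
noncomputable def maxQVal (Q : Set (Set S → ℝ)) (φ : S → ℝ) : EReal :=
  ⨆ q ∈ Q, (fint q φ : EReal)

/-- `max_{P ∈ Pfam} min_{p ∈ P} ∫ φ dp`. -/
noncomputable def maxminPVal (Pfam : Set (Set (Set S → ℝ))) (φ : S → ℝ) : EReal :=
  ⨆ P ∈ Pfam, minPVal P φ

/-- `min_{Q ∈ Qfam} max_{q ∈ Q} ∫ φ dq`. -/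
noncomputable def minmaxQVal (Qfam : Set (Set (Set S → ℝ))) (φ : S → ℝ) : EReal :=
  ⨅ Q ∈ Qfam, maxQVal Q φ

open Classical in
/-- The convex-analytic indicator `δ_P` of a set `P`. -/
noncomputable def ind (P : Set (Set S → ℝ)) : (Set S → ℝ) → EReal :=
  fun p => if p ∈ P then (0 : EReal) else ⊤

variable [AddCommGroup V] [Module ℝ V]

/-- `𝓕`: the simple acts, i.e. `Σ`-measurable maps `f : S → X` with finitely many values. -/
def Acts (𝓐 : Set (Set S)) (X : Set V) : Set (S → V) :=
  {f | (∀ s, f s ∈ X) ∧ (Set.range f).Finite ∧ ∀ v : V, f ⁻¹' {v} ∈ 𝓐}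

/-- The constant act with value `x`. -/
def constAct (x : V) : S → V := fun _ : S => x

/-- The mixture `α f + (1 - α) g` of two acts, defined statewise. -/
def mix (α : ℝ) (f g : S → V) : S → V := fun s => α • f s + (1 - α) • g s

/-- The statewise utility `u ∘ f` of an act. -/
def uAct (u : V → ℝ) (f : S → V) : S → ℝ := fun s => u (f s)

/-- `u : X → ℝ` is nonconstant and affine on `X`. -/
def IsNonconstAffine (X : Set V) (u : V → ℝ) : Prop :=
  (∀ x ∈ X, ∀ y ∈ X, ∀ t ∈ Set.Icc (0 : ℝ) 1,
      u (t • x + (1 - t) • y) = t * u x + (1 - t) * u y) ∧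
  ∃ x ∈ X, ∃ y ∈ X, u x ≠ u y

/-- A niveloidal preference: Axioms A1 (weak order), A2 (monotonicity), A3 (Archimedean)
and A4 (weak C-independence). -/
structure NiveloidalPref (𝓐 : Set (Set S)) (X : Set V)
    (R : (S → V) → (S → V) → Prop) : Prop where
  nontrivial : ∃ f ∈ Acts 𝓐 X, ∃ g ∈ Acts 𝓐 X, R f g ∧ ¬ R g f
  complete : ∀ f ∈ Acts 𝓐 X, ∀ g ∈ Acts 𝓐 X, R f g ∨ R g f
  transitive : ∀ f ∈ Acts 𝓐 X, ∀ g ∈ Acts 𝓐 X, ∀ h ∈ Acts 𝓐 X, R f g → R g h → R f h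
  monotone : ∀ f ∈ Acts 𝓐 X, ∀ g ∈ Acts 𝓐 X,
    (∀ s : S, R (constAct (f s)) (constAct (g s))) → R f g
  archimedean : ∀ f ∈ Acts 𝓐 X, ∀ g ∈ Acts 𝓐 X, ∀ h ∈ Acts 𝓐 X,
    (R f g ∧ ¬ R g f) → (R g h ∧ ¬ R h g) →
    ∃ α ∈ Set.Ioo (0 : ℝ) 1, ∃ β ∈ Set.Ioo (0 : ℝ) 1,
      (R (mix α f h) g ∧ ¬ R g (mix α f h)) ∧
      (R g (mix β f h) ∧ ¬ R (mix β f h) g)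
  weakCIndep : ∀ f ∈ Acts 𝓐 X, ∀ g ∈ Acts 𝓐 X, ∀ x ∈ X, ∀ y ∈ X,
    ∀ α ∈ Set.Ioo (0 : ℝ) 1,
    R (mix α f (constAct x)) (mix α g (constAct x)) →
    R (mix α f (constAct y)) (mix α g (constAct y))

/-- An invariant biseparable preference: Axioms A1 (weak order), A2 (monotonicity),
A3 (Archimedean) and A7 (C-independence). -/
structure IBPref (𝓐 : Set (Set S)) (X : Set V)
    (R : (S → V) → (S → V) → Prop) : Prop where
  nontrivial : ∃ f ∈ Acts 𝓐 X, ∃ g ∈ Acts 𝓐 X, R f g ∧ ¬ R g f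
  complete : ∀ f ∈ Acts 𝓐 X, ∀ g ∈ Acts 𝓐 X, R f g ∨ R g f
  transitive : ∀ f ∈ Acts 𝓐 X, ∀ g ∈ Acts 𝓐 X, ∀ h ∈ Acts 𝓐 X, R f g → R g h → R f h
  monotone : ∀ f ∈ Acts 𝓐 X, ∀ g ∈ Acts 𝓐 X,
    (∀ s : S, R (constAct (f s)) (constAct (g s))) → R f g
  archimedean : ∀ f ∈ Acts 𝓐 X, ∀ g ∈ Acts 𝓐 X, ∀ h ∈ Acts 𝓐 X,
    (R f g ∧ ¬ R g f) → (R g h ∧ ¬ R h g) →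
    ∃ α ∈ Set.Ioo (0 : ℝ) 1, ∃ β ∈ Set.Ioo (0 : ℝ) 1,
      (R (mix α f h) g ∧ ¬ R g (mix α f h)) ∧
      (R g (mix β f h) ∧ ¬ R (mix β f h) g)
  cIndep : ∀ f ∈ Acts 𝓐 X, ∀ g ∈ Acts 𝓐 X, ∀ x ∈ X, ∀ α ∈ Set.Ioo (0 : ℝ) 1,
    (R f g ↔ R (mix α f (constAct x)) (mix α g (constAct x)))

/-- Axiom A5 (uncertainty aversion). -/
def UncertaintyAverse (𝓐 : Set (Set S)) (X : Set V)
    (R : (S → V) → (S → V) → Prop) : Prop :=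
  ∀ f ∈ Acts 𝓐 X, ∀ g ∈ Acts 𝓐 X, ∀ α ∈ Set.Ioo (0 : ℝ) 1,
    R f g → R g f → R (mix α f g) f

/-- `xf` assigns to every act a certainty equivalent. -/
def IsCE (𝓐 : Set (Set S)) (X : Set V) (R : (S → V) → (S → V) → Prop)
    (xf : (S → V) → V) : Prop :=
  ∀ f ∈ Acts 𝓐 X, xf f ∈ X ∧ R f (constAct (xf f)) ∧ R (constAct (xf f)) f

/-- `C*`: the maximal candidate set of penalty functions. -/
def CstarOf (𝓐 : Set (Set S)) (X : Set V) (u : V → ℝ) (xf : (S → V) → V) :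
    Set ((Set S → ℝ) → EReal) :=
  {c | c ∈ Cscr 𝓐 ∧ ∀ f ∈ Acts 𝓐 X, minVal 𝓐 c (uAct u f) ≤ (u (xf f) : EReal)}

/-- `B*`: the maximal candidate set of reward functions. -/
def BstarOf (𝓐 : Set (Set S)) (X : Set V) (u : V → ℝ) (xf : (S → V) → V) :
    Set ((Set S → ℝ) → EReal) :=
  {b | b ∈ Cscr 𝓐 ∧ ∀ f ∈ Acts 𝓐 X, (u (xf f) : EReal) ≤ maxVal 𝓐 b (uAct u f)}

/-- `Pfam*`: the maximal family of prior sets (maxmin form). -/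
def PstarOf (𝓐 : Set (Set S)) (X : Set V) (u : V → ℝ) (xf : (S → V) → V) :
    Set (Set (Set S → ℝ)) :=
  {P | P ⊆ Δset 𝓐 ∧ P.Nonempty ∧ Convex ℝ P ∧ (@IsCompact _ (weakStar 𝓐) P) ∧
    ∀ f ∈ Acts 𝓐 X, minPVal P (uAct u f) ≤ (u (xf f) : EReal)}

/-- `Qfam*`: the maximal family of prior sets (minmax form). -/
def QstarOf (𝓐 : Set (Set S)) (X : Set V) (u : V → ℝ) (xf : (S → V) → V) :
    Set (Set (Set S → ℝ)) :=
  {Q | Q ⊆ Δset 𝓐 ∧ Q.Nonempty ∧ Convex ℝ Q ∧ (@IsCompact _ (weakStar 𝓐) Q) ∧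
    ∀ f ∈ Acts 𝓐 X, (u (xf f) : EReal) ≤ maxQVal Q (uAct u f)}

/-- `C` yields the maxmin representation of `R` with utility `u`. -/
def MaxminRep (𝓐 : Set (Set S)) (X : Set V) (R : (S → V) → (S → V) → Prop)
    (u : V → ℝ) (C : Set ((Set S → ℝ) → EReal)) : Prop :=
  ∀ f ∈ Acts 𝓐 X, ∀ g ∈ Acts 𝓐 X,
    (R f g ↔ maxminVal 𝓐 C (uAct u g) ≤ maxminVal 𝓐 C (uAct u f))

/-- All indicated maxima over `C` and minima over `Δ` are attained. -/
def MaxminAttained (𝓐 : Set (Set S)) (X : Set V) (u : V → ℝ)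
    (C : Set ((Set S → ℝ) → EReal)) : Prop :=
  ∀ f ∈ Acts 𝓐 X,
    (∀ c ∈ C, ∃ p ∈ Δset 𝓐,
      minVal 𝓐 c (uAct u f) = (fint p (uAct u f) : EReal) + c p) ∧
    ∃ c ∈ C, maxminVal 𝓐 C (uAct u f) = minVal 𝓐 c (uAct u f)

/-- `B` yields the minmax representation of `R` with utility `u`. -/
def MinmaxRep (𝓐 : Set (Set S)) (X : Set V) (R : (S → V) → (S → V) → Prop)
    (u : V → ℝ) (B : Set ((Set S → ℝ) → EReal)) : Prop :=
  ∀ f ∈ Acts 𝓐 X, ∀ g ∈ Acts 𝓐 X,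
    (R f g ↔ minmaxVal 𝓐 B (uAct u g) ≤ minmaxVal 𝓐 B (uAct u f))

/-- All indicated minima over `B` and maxima over `Δ` are attained. -/
def MinmaxAttained (𝓐 : Set (Set S)) (X : Set V) (u : V → ℝ)
    (B : Set ((Set S → ℝ) → EReal)) : Prop :=
  ∀ f ∈ Acts 𝓐 X,
    (∀ b ∈ B, ∃ q ∈ Δset 𝓐,
      maxVal 𝓐 b (uAct u f) = (fint q (uAct u f) : EReal) - b q) ∧
    ∃ b ∈ B, minmaxVal 𝓐 B (uAct u f) = maxVal 𝓐 b (uAct u f)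

/-- A family of nonempty, convex, weak*-compact subsets of `Δ`. -/
def IsPriorFamily (𝓐 : Set (Set S)) (Pfam : Set (Set (Set S → ℝ))) : Prop :=
  Pfam.Nonempty ∧ ∀ P ∈ Pfam,
    P ⊆ Δset 𝓐 ∧ P.Nonempty ∧ Convex ℝ P ∧ (@IsCompact _ (weakStar 𝓐) P)

/-- `Pfam` yields the maxmin representation of `R` with utility `u`. -/
def PRep (𝓐 : Set (Set S)) (X : Set V) (R : (S → V) → (S → V) → Prop)
    (u : V → ℝ) (Pfam : Set (Set (Set S → ℝ))) : Prop :=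
  ∀ f ∈ Acts 𝓐 X, ∀ g ∈ Acts 𝓐 X,
    (R f g ↔ maxminPVal Pfam (uAct u g) ≤ maxminPVal Pfam (uAct u f))

/-- All indicated maxima over `Pfam` and minima over `P` are attained. -/
def PAttained (𝓐 : Set (Set S)) (X : Set V) (u : V → ℝ)
    (Pfam : Set (Set (Set S → ℝ))) : Prop :=
  ∀ f ∈ Acts 𝓐 X,
    (∀ P ∈ Pfam, ∃ p ∈ P, minPVal P (uAct u f) = (fint p (uAct u f) : EReal)) ∧
    ∃ P ∈ Pfam, maxminPVal Pfam (uAct u f) = minPVal P (uAct u f)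

/-- `Qfam` yields the minmax representation of `R` with utility `u`. -/
def QRep (𝓐 : Set (Set S)) (X : Set V) (R : (S → V) → (S → V) → Prop)
    (u : V → ℝ) (Qfam : Set (Set (Set S → ℝ))) : Prop :=
  ∀ f ∈ Acts 𝓐 X, ∀ g ∈ Acts 𝓐 X,
    (R f g ↔ minmaxQVal Qfam (uAct u g) ≤ minmaxQVal Qfam (uAct u f))

/-- All indicated minima over `Qfam` and maxima over `Q` are attained. -/
def QAttained (𝓐 : Set (Set S)) (X : Set V) (u : V → ℝ)
    (Qfam : Set (Set (Set S → ℝ))) : Prop :=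
  ∀ f ∈ Acts 𝓐 X,
    (∀ Q ∈ Qfam, ∃ q ∈ Q, maxQVal Q (uAct u f) = (fint q (uAct u f) : EReal)) ∧
    ∃ Q ∈ Qfam, minmaxQVal Qfam (uAct u f) = maxQVal Q (uAct u f)

/-- `c₁ ≈_u c₂`: `c₁` and `c₂` induce the same variational functional on `B₀(Σ, u(X))`. -/
def ApproxEq (𝓐 : Set (Set S)) (X : Set V) (u : V → ℝ)
    (c₁ c₂ : (Set S → ℝ) → EReal) : Prop :=
  ∀ φ : S → ℝ, IsSimpleFn 𝓐 φ → (∀ s, φ s ∈ u '' X) →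
    minVal 𝓐 c₁ φ = minVal 𝓐 c₂ φ

/-- `R₁` is more ambiguity averse than `R₂`. -/
def MoreAmbiguityAverse (𝓐 : Set (Set S)) (X : Set V)
    (R₁ R₂ : (S → V) → (S → V) → Prop) : Prop :=
  ∀ f ∈ Acts 𝓐 X, ∀ x ∈ X, R₂ (constAct x) f → R₁ (constAct x) f

/-- `u₁` and `u₂` are positive affine transformations of each other on `X`. -/
def CardEquiv (X : Set V) (u₁ u₂ : V → ℝ) : Prop :=
  ∃ a b : ℝ, 0 < a ∧ ∀ x ∈ X, u₂ x = a * u₁ x + b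

/-- A capacity on `(S, Σ)`. -/
def IsCapacity (𝓐 : Set (Set S)) (π : Set S → ℝ) : Prop :=
  π ∅ = 0 ∧ π Set.univ = 1 ∧ ∀ A ∈ 𝓐, ∀ B ∈ 𝓐, A ⊆ B → π A ≤ π B

/-- The Choquet integral of a (simple) function against a capacity. -/
noncomputable def choquet (π : Set S → ℝ) (φ : S → ℝ) : ℝ :=
  (∫ t in Set.Ioi (0 : ℝ), π {s | t ≤ φ s}) +
    ∫ t in Set.Iio (0 : ℝ), (π {s | t ≤ φ s} - 1)

end Paper

/-!
With a grounded maxmin representation, `u (x_f)` is the variational value of `u ∘ f`, so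
`f ↦ u (x_f)` is a niveloid. Comparing `x ≿ f` through certainty equivalents, `≿₁` is more
ambiguity averse than `≿₂` iff `u₁` is an increasing function of `u₂` (hence, both being affine
on a convex set, a positive affine transformation of it) and `u₁ (x¹_f) ≤ u₁ (x²_f)` for all `f`.
That inequality is in turn equivalent to `C₁* ⊆ C₂*` and to `B₂* ⊆ B₁*`: the sets vary
monotonically with the certainty equivalents, and conversely affine penalties and rewards built
from `∫ u ∘ f` separate them, by the niveloid property tested at Dirac measures.
-/

namespace Paper

variable {S V : Type*}

section SetAlgebra
variable {𝓐 : Set (Set S)}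

lemma IsSetAlg.univ_mem (hA : IsSetAlg 𝓐) : Set.univ ∈ 𝓐 := by
  simpa using hA.compl_mem ∅ hA.empty_mem

lemma IsSetAlg.inter_mem (hA : IsSetAlg 𝓐) {A B : Set S} (hA' : A ∈ 𝓐) (hB : B ∈ 𝓐) :
    A ∩ B ∈ 𝓐 := by
  simpa [Set.compl_union] using
    hA.compl_mem _ (hA.union_mem _ (hA.compl_mem _ hA') _ (hA.compl_mem _ hB))

lemma IsSetAlg.biUnion_mem (hA : IsSetAlg 𝓐) {ι : Type*} (I : Finset ι) {A : ι → Set S}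
    (h : ∀ i ∈ I, A i ∈ 𝓐) : (⋃ i ∈ I, A i) ∈ 𝓐 := by
  classical
  induction I using Finset.induction_on with
  | empty => simpa using hA.empty_mem
  | insert a I _ ih =>
    rw [Finset.set_biUnion_insert]
    exact hA.union_mem _ (h a (I.mem_insert_self a)) _
      (ih fun i hi => h i (Finset.mem_insert_of_mem hi))

end SetAlgebra

section FinitelyAdditive
variable {𝓐 : Set (Set S)} {p : Set S → ℝ}

lemma apply_empty_of_mem_Δset (hA : IsSetAlg 𝓐) (hp : p ∈ Δset 𝓐) : p ∅ = 0 := by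
  have := hp.2.2.1 ∅ hA.empty_mem ∅ hA.empty_mem disjoint_bot_left
  simp only [Set.union_self] at this
  linarith

lemma apply_biUnion_of_mem_Δset (hA : IsSetAlg 𝓐) (hp : p ∈ Δset 𝓐) {ι : Type*}
    (I : Finset ι) {A : ι → Set S} (hmem : ∀ i ∈ I, A i ∈ 𝓐)
    (hdisj : (I : Set ι).PairwiseDisjoint A) :
    p (⋃ i ∈ I, A i) = ∑ i ∈ I, p (A i) := by
  classical
  induction I using Finset.induction_on with
  | empty => simpa using apply_empty_of_mem_Δset hA hp
  | insert a I ha ih =>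
    have hmem' : ∀ i ∈ I, A i ∈ 𝓐 := fun i hi => hmem i (Finset.mem_insert_of_mem hi)
    have hsep : Disjoint (A a) (⋃ i ∈ I, A i) :=
      Set.disjoint_iUnion₂_right.2 fun i hi =>
        hdisj (by simp) (by simp [hi]) (by rintro rfl; exact ha hi)
    rw [Finset.set_biUnion_insert, Finset.sum_insert ha,
      hp.2.2.1 _ (hmem a (I.mem_insert_self a)) _ (hA.biUnion_mem I hmem') hsep,
      ih hmem' (hdisj.subset (by simp))]

variable {β : Type*} {χ : S → β}

lemma preimage_comp_eq_biUnion (hχ : (Set.range χ).Finite) (g : β → ℝ) (t : ℝ) :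
    (g ∘ χ) ⁻¹' {t} = ⋃ w ∈ hχ.toFinset.filter (g · = t), χ ⁻¹' {w} := by
  ext s
  simp

lemma sum_apply_preimage_eq_one (hA : IsSetAlg 𝓐) (hp : p ∈ Δset 𝓐)
    (hχ : (Set.range χ).Finite) (hfib : ∀ w, χ ⁻¹' {w} ∈ 𝓐) :
    ∑ w ∈ hχ.toFinset, p (χ ⁻¹' {w}) = 1 := by
  have hcover : (⋃ w ∈ hχ.toFinset, χ ⁻¹' {w}) = Set.univ := by
    ext s
    simp
  rw [← apply_biUnion_of_mem_Δset hA hp _ (fun w _ => hfib w) (Set.pairwiseDisjoint_fiber χ _),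
    hcover, hp.1]

lemma IsSimpleFn.comp (hA : IsSetAlg 𝓐) (hχ : (Set.range χ).Finite)
    (hfib : ∀ w, χ ⁻¹' {w} ∈ 𝓐) (g : β → ℝ) : IsSimpleFn 𝓐 (g ∘ χ) :=
  ⟨Set.range_comp g χ ▸ hχ.image g, fun t => preimage_comp_eq_biUnion hχ g t ▸
    hA.biUnion_mem _ fun w _ => hfib w⟩

lemma fint_of_finite {φ : S → ℝ} (hφ : (Set.range φ).Finite) (p : Set S → ℝ) :
    fint p φ = ∑ t ∈ hφ.toFinset, t * p (φ ⁻¹' {t}) := by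
  rw [fint, dif_pos hφ]

lemma fint_comp (hA : IsSetAlg 𝓐) (hp : p ∈ Δset 𝓐) (hχ : (Set.range χ).Finite)
    (hfib : ∀ w, χ ⁻¹' {w} ∈ 𝓐) (g : β → ℝ) :
    fint p (g ∘ χ) = ∑ w ∈ hχ.toFinset, g w * p (χ ⁻¹' {w}) := by
  classical
  have hgχ := (IsSimpleFn.comp hA hχ hfib g).1
  have hfiber : ∀ t, p ((g ∘ χ) ⁻¹' {t}) = ∑ w ∈ hχ.toFinset with g w = t, p (χ ⁻¹' {w}) := by
    intro t
    rw [preimage_comp_eq_biUnion hχ g t]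
    exact apply_biUnion_of_mem_Δset hA hp _ (fun w _ => hfib w) (Set.pairwiseDisjoint_fiber χ _)
  rw [fint_of_finite hgχ]
  simp_rw [hfiber, Finset.mul_sum]
  rw [← Finset.sum_fiberwise_of_maps_to (g := g) (t := hgχ.toFinset)]
  · refine Finset.sum_congr rfl fun t _ => Finset.sum_congr rfl fun w hw => ?_
    rw [(Finset.mem_filter.1 hw).2]
  · intro w hw
    obtain ⟨s, rfl⟩ := hχ.mem_toFinset.1 hw
    exact hgχ.mem_toFinset.2 ⟨s, rfl⟩

lemma fint_const (hA : IsSetAlg 𝓐) (hp : p ∈ Δset 𝓐) (k : ℝ) : fint p (fun _ : S => k) = k := by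
  have hχ : (Set.range fun _ : S => ()).Finite := Set.toFinite _
  have hfib : ∀ w, (fun _ : S => ()) ⁻¹' {w} ∈ 𝓐 := fun _ => by simpa using hA.univ_mem
  rw [show (fun _ : S => k) = (fun _ : Unit => k) ∘ (fun _ : S => ()) from rfl,
    fint_comp hA hp hχ hfib, ← Finset.mul_sum, sum_apply_preimage_eq_one hA hp hχ hfib, mul_one]

lemma fint_le_fint_add (hA : IsSetAlg 𝓐) (hp : p ∈ Δset 𝓐) {φ ψ : S → ℝ}
    (hφ : IsSimpleFn 𝓐 φ) (hψ : IsSimpleFn 𝓐 ψ) {M : ℝ} (h : ∀ s, φ s ≤ ψ s + M) :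
    fint p φ ≤ fint p ψ + M := by
  set χ : S → ℝ × ℝ := fun s => (φ s, ψ s)
  have hχ : (Set.range χ).Finite :=
    (hφ.1.prod hψ.1).subset (Set.range_subset_iff.2 fun s => ⟨⟨s, rfl⟩, ⟨s, rfl⟩⟩)
  have hfib : ∀ w, χ ⁻¹' {w} ∈ 𝓐 := fun w => by
    convert hA.inter_mem (hφ.2 w.1) (hψ.2 w.2) using 1
    ext s
    simp [χ, Prod.ext_iff]
  calc fint p φ = ∑ w ∈ hχ.toFinset, w.1 * p (χ ⁻¹' {w}) := fint_comp hA hp hχ hfib Prod.fst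
    _ ≤ ∑ w ∈ hχ.toFinset, (w.2 + M) * p (χ ⁻¹' {w}) := by
        refine Finset.sum_le_sum fun w hw => mul_le_mul_of_nonneg_right ?_ (hp.2.1 _ (hfib w))
        obtain ⟨s, rfl⟩ := hχ.mem_toFinset.1 hw
        exact h s
    _ = fint p ψ + M := by
        rw [show ψ = Prod.snd ∘ χ from rfl, fint_comp hA hp hχ hfib]
        simp only [add_mul, Finset.sum_add_distrib, ← Finset.mul_sum,
          sum_apply_preimage_eq_one hA hp hχ hfib, mul_one]

lemma fint_smul_add_smul (a b : ℝ) (p q : Set S → ℝ) (φ : S → ℝ) :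
    fint (a • p + b • q) φ = a * fint p φ + b * fint q φ := by
  by_cases hφ : (Set.range φ).Finite
  · simp only [fint_of_finite hφ, Finset.mul_sum, ← Finset.sum_add_distrib, Pi.add_apply,
      Pi.smul_apply, smul_eq_mul]
    exact Finset.sum_congr rfl fun _ _ => by ring
  · simp [fint, hφ]

open Classical in
noncomputable def dirac (𝓐 : Set (Set S)) (s : S) : Set S → ℝ :=
  fun A => if A ∈ 𝓐 ∧ s ∈ A then 1 else 0

lemma dirac_mem_Δset (hA : IsSetAlg 𝓐) (s : S) : dirac 𝓐 s ∈ Δset 𝓐 := by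
  classical
  refine ⟨by simp [dirac, hA.univ_mem], fun A _ => by unfold dirac; split_ifs <;> norm_num,
    fun A hA' B hB hAB => ?_, fun A hA' => by simp [dirac, hA']⟩
  have hAB' : s ∈ A → s ∉ B := fun h h' => Set.disjoint_left.1 hAB h h'
  by_cases h : s ∈ A <;> by_cases h' : s ∈ B <;>
    simp_all [dirac, hA.union_mem A hA' B hB]

lemma fint_dirac {φ : S → ℝ} (hφ : IsSimpleFn 𝓐 φ) (s : S) :
    fint (dirac 𝓐 s) φ = φ s := by
  rw [fint_of_finite hφ.1, Finset.sum_eq_single (φ s)]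
  · simp [dirac, hφ.2 (φ s)]
  · intro t _ ht
    simp [dirac, Ne.symm ht]
  · exact fun h => absurd (hφ.1.mem_toFinset.2 (Set.mem_range_self s)) h

end FinitelyAdditive

noncomputable def addCoeOrderIso (k : ℝ) : EReal ≃o EReal :=
  Equiv.toOrderIso
    { toFun := fun x => x + k
      invFun := fun x => x - k
      left_inv := fun _ => EReal.add_sub_cancel_right
      right_inv := fun _ => EReal.sub_add_cancel }
    (fun _ _ h => add_le_add_left h _) (fun _ _ h => EReal.sub_le_sub h le_rfl)

lemma biInf_add_coe {α : Type*} (s : Set α) (f : α → EReal) (k : ℝ) :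
    (⨅ i ∈ s, f i) + k = ⨅ i ∈ s, (f i + k) :=
  (addCoeOrderIso k).map_iInf₂ _

lemma biSup_add_coe {α : Type*} (s : Set α) (f : α → EReal) (k : ℝ) :
    (⨆ i ∈ s, f i) + k = ⨆ i ∈ s, (f i + k) :=
  (addCoeOrderIso k).map_iSup₂ _

section Variational
variable {𝓐 : Set (Set S)} {C : Set ((Set S → ℝ) → EReal)}

lemma minVal_const (hA : IsSetAlg 𝓐) (c : (Set S → ℝ) → EReal) (k : ℝ) :
    minVal 𝓐 c (fun _ => k) = (⨅ p ∈ Δset 𝓐, c p) + k := by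
  rw [minVal, biInf_add_coe]
  refine biInf_congr fun p hp => ?_
  rw [fint_const hA hp, add_comm]

lemma maxminVal_const (hA : IsSetAlg 𝓐) (hG : Grounded 𝓐 C) (k : ℝ) :
    maxminVal 𝓐 C (fun _ => k) = k := by
  simp only [maxminVal, minVal_const hA, ← biSup_add_coe]
  rw [hG, zero_add]

lemma minVal_le_add {c : (Set S → ℝ) → EReal} {φ ψ : S → ℝ} {M : ℝ}
    (h : ∀ p ∈ Δset 𝓐, fint p φ ≤ fint p ψ + M) : minVal 𝓐 c φ ≤ minVal 𝓐 c ψ + M := by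
  rw [minVal, minVal, biInf_add_coe]
  refine iInf₂_mono fun p hp => ?_
  calc (fint p φ : EReal) + c p ≤ ((fint p ψ + M : ℝ) : EReal) + c p := by gcongr; exact h p hp
    _ = (fint p ψ + c p) + M := by rw [EReal.coe_add, add_right_comm]

lemma maxminVal_le_add {φ ψ : S → ℝ} {M : ℝ} (h : ∀ p ∈ Δset 𝓐, fint p φ ≤ fint p ψ + M) :
    maxminVal 𝓐 C φ ≤ maxminVal 𝓐 C ψ + M := by
  rw [maxminVal, maxminVal, biSup_add_coe]
  exact iSup₂_mono fun _ _ => minVal_le_add h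

lemma minVal_le_dirac {c : (Set S → ℝ) → EReal} {φ : S → ℝ} (hA : IsSetAlg 𝓐)
    (hφ : IsSimpleFn 𝓐 φ) (s : S) : minVal 𝓐 c φ ≤ φ s + c (dirac 𝓐 s) := by
  rw [← fint_dirac hφ s]
  exact biInf_le _ (dirac_mem_Δset hA s)

lemma dirac_le_maxVal {b : (Set S → ℝ) → EReal} {φ : S → ℝ} (hA : IsSetAlg 𝓐)
    (hφ : IsSimpleFn 𝓐 φ) (s : S) : φ s - b (dirac 𝓐 s) ≤ maxVal 𝓐 b φ := by
  rw [← fint_dirac hφ s]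
  exact le_biSup (fun q => (fint q φ : EReal) - b q) (dirac_mem_Δset hA s)

lemma affine_fint_mem_Cscr (α β : ℝ) {φ : S → ℝ} (hφ : IsSimpleFn 𝓐 φ) :
    (fun p => ((α * fint p φ + β : ℝ) : EReal)) ∈ Cscr 𝓐 := by
  refine ⟨fun p _ => EReal.bot_lt_coe _, ?_, ?_⟩
  · let _ : TopologicalSpace (Set S → ℝ) := weakStar 𝓐
    have hfints : Continuous fun p (ψ : {ψ : S → ℝ // IsSimpleFn 𝓐 ψ}) => fint p ψ.1 :=
      continuous_induced_dom
    have hfint : Continuous fun p : Set S → ℝ => fint p φ :=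
      (continuous_apply (⟨φ, hφ⟩ : {ψ : S → ℝ // IsSimpleFn 𝓐 ψ})).comp hfints
    have hc : Continuous fun p => ((α * fint p φ + β : ℝ) : EReal) :=
      continuous_coe_real_ereal.comp ((continuous_const.mul hfint).add continuous_const)
    exact hc.lowerSemicontinuous.lowerSemicontinuousOn _
  · intro p _ q _ a b _ _ hab
    have heq : α * fint (a • p + b • q) φ + β =
        a * (α * fint p φ + β) + b * (α * fint q φ + β) := by
      rw [fint_smul_add_smul]
      linear_combination (-β) * hab
    simp only [heq, EReal.coe_add, EReal.coe_mul, le_refl]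

end Variational

section CertaintyEquivalent
variable {𝓐 : Set (Set S)} {X : Set V} {R : (S → V) → (S → V) → Prop} {u : V → ℝ}
  {C : Set ((Set S → ℝ) → EReal)} {xf : (S → V) → V}

lemma constAct_mem_Acts (hA : IsSetAlg 𝓐) {x : V} (hx : x ∈ X) : constAct x ∈ Acts 𝓐 X := by
  classical
  refine ⟨fun _ => hx, (Set.finite_singleton x).subset Set.range_const_subset, fun v => ?_⟩
  change (fun _ : S => x) ⁻¹' {v} ∈ 𝓐
  rw [Set.preimage_const]
  split_ifs
  exacts [hA.univ_mem, hA.empty_mem]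

lemma uAct_isSimpleFn (hA : IsSetAlg 𝓐) {f : S → V} (hf : f ∈ Acts 𝓐 X) :
    IsSimpleFn 𝓐 (uAct u f) :=
  IsSimpleFn.comp hA hf.2.1 hf.2.2 u

lemma maxminVal_uAct_eq (hA : IsSetAlg 𝓐) (hG : Grounded 𝓐 C) (hrep : MaxminRep 𝓐 X R u C)
    (hxf : IsCE 𝓐 X R xf) {f : S → V} (hf : f ∈ Acts 𝓐 X) :
    maxminVal 𝓐 C (uAct u f) = u (xf f) := by
  obtain ⟨hxX, hfx, hxf'⟩ := hxf f hf
  have hx := constAct_mem_Acts hA hxX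
  rw [← maxminVal_const hA hG (u (xf f))]
  exact le_antisymm ((hrep _ hx f hf).1 hxf') ((hrep f hf _ hx).1 hfx)

lemma rel_constAct_iff (hA : IsSetAlg 𝓐) (hG : Grounded 𝓐 C) (hrep : MaxminRep 𝓐 X R u C)
    (hxf : IsCE 𝓐 X R xf) {f : S → V} (hf : f ∈ Acts 𝓐 X) {x : V} (hx : x ∈ X) :
    R (constAct x) f ↔ u (xf f) ≤ u x := by
  rw [hrep _ (constAct_mem_Acts hA hx) f hf, maxminVal_uAct_eq hA hG hrep hxf hf]
  exact (maxminVal_const hA hG (u x)).symm ▸ EReal.coe_le_coe_iff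

/-- The certainty-equivalent utility `f ↦ u (xf f)` is a niveloid: this one inequality encodes
both monotonicity and invariance under adding constants to `u ∘ f`. -/
def IsNiveloidCE (𝓐 : Set (Set S)) (X : Set V) (u : V → ℝ) (xf : (S → V) → V) : Prop :=
  ∀ f ∈ Acts 𝓐 X, ∀ g ∈ Acts 𝓐 X, ∀ M : ℝ,
    (∀ s, u (g s) ≤ u (f s) + M) → u (xf g) ≤ u (xf f) + M

lemma isNiveloidCE_of_maxminRep (hA : IsSetAlg 𝓐) (hG : Grounded 𝓐 C)
    (hrep : MaxminRep 𝓐 X R u C) (hxf : IsCE 𝓐 X R xf) : IsNiveloidCE 𝓐 X u xf := by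
  intro f hf g hg M hM
  have h := maxminVal_le_add (C := C) fun p hp =>
    fint_le_fint_add hA hp (uAct_isSimpleFn hA hg) (uAct_isSimpleFn hA hf) hM
  rw [maxminVal_uAct_eq hA hG hrep hxf hf, maxminVal_uAct_eq hA hG hrep hxf hg,
    ← EReal.coe_add] at h
  exact EReal.coe_le_coe_iff.1 h

lemma exists_forall_sub_le [Nonempty S] {φ ψ : S → ℝ} (hφ : (Set.range φ).Finite)
    (hψ : (Set.range ψ).Finite) : ∃ s₀, ∀ s, φ s₀ - ψ s₀ ≤ φ s - ψ s := by
  have hfin : (Set.range fun s => φ s - ψ s).Finite :=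
    (hφ.image2 (· - ·) hψ).subset <|
      Set.range_subset_iff.2 fun s => Set.mem_image2_of_mem ⟨s, rfl⟩ ⟨s, rfl⟩
  obtain ⟨_, ⟨s₀, rfl⟩, hs₀⟩ := Set.exists_min_image _ id hfin (Set.range_nonempty _)
  exact ⟨s₀, fun s => hs₀ _ ⟨s, rfl⟩⟩

/-- The witness is the affine penalty `p ↦ u (xf₁ f) - ∫ u ∘ f dp`: it lies in `C₁*` and its
value at `f` is exactly `u (xf₁ f)`. -/
lemma ce_le_of_cstarOf_subset [Nonempty S] (hA : IsSetAlg 𝓐) {xf₁ xf₂ : (S → V) → V}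
    (hniv : IsNiveloidCE 𝓐 X u xf₁) (hsub : CstarOf 𝓐 X u xf₁ ⊆ CstarOf 𝓐 X u xf₂)
    {f : S → V} (hf : f ∈ Acts 𝓐 X) : u (xf₁ f) ≤ u (xf₂ f) := by
  have hφ := uAct_isSimpleFn (u := u) hA hf
  set c := fun p => ((-1 * fint p (uAct u f) + u (xf₁ f) : ℝ) : EReal)
  have hc : c ∈ CstarOf 𝓐 X u xf₁ := by
    refine ⟨affine_fint_mem_Cscr _ _ hφ, fun g hg => ?_⟩
    have hψ := uAct_isSimpleFn (u := u) hA hg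
    obtain ⟨s₀, hs₀⟩ := exists_forall_sub_le hψ.1 hφ.1
    have hle := hniv g hg f hf (u (f s₀) - u (g s₀)) fun s => by
      have := hs₀ s; simp only [uAct] at this; linarith
    refine (minVal_le_dirac hA hψ s₀).trans ?_
    rw [← EReal.coe_add, fint_dirac hφ, EReal.coe_le_coe_iff]
    simp only [uAct]
    linarith
  have hval : minVal 𝓐 c (uAct u f) = u (xf₁ f) := by
    refine (biInf_congr fun p _ => ?_).trans
      (biInf_const ⟨_, dirac_mem_Δset hA (Classical.arbitrary S)⟩)
    rw [← EReal.coe_add]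
    ring_nf
  simpa [hval] using (hsub hc).2 f hf

/-- Dually, the witness is the affine reward `q ↦ ∫ u ∘ f dq - u (xf₂ f)` in `B₂*`. -/
lemma ce_le_of_bstarOf_subset [Nonempty S] (hA : IsSetAlg 𝓐) {xf₁ xf₂ : (S → V) → V}
    (hniv : IsNiveloidCE 𝓐 X u xf₂) (hsub : BstarOf 𝓐 X u xf₂ ⊆ BstarOf 𝓐 X u xf₁)
    {f : S → V} (hf : f ∈ Acts 𝓐 X) : u (xf₁ f) ≤ u (xf₂ f) := by
  have hφ := uAct_isSimpleFn (u := u) hA hf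
  set b := fun q => ((1 * fint q (uAct u f) + -u (xf₂ f) : ℝ) : EReal)
  have hb : b ∈ BstarOf 𝓐 X u xf₂ := by
    refine ⟨affine_fint_mem_Cscr _ _ hφ, fun g hg => ?_⟩
    have hψ := uAct_isSimpleFn (u := u) hA hg
    obtain ⟨s₀, hs₀⟩ := exists_forall_sub_le hφ.1 hψ.1
    have hle := hniv f hf g hg (u (g s₀) - u (f s₀)) fun s => by
      have := hs₀ s; simp only [uAct] at this; linarith
    refine le_trans ?_ (dirac_le_maxVal hA hψ s₀)
    rw [← EReal.coe_sub, fint_dirac hφ, EReal.coe_le_coe_iff]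
    simp only [uAct]
    linarith
  have hval : maxVal 𝓐 b (uAct u f) = u (xf₂ f) := by
    refine (biSup_congr fun q _ => ?_).trans
      (biSup_const ⟨_, dirac_mem_Δset hA (Classical.arbitrary S)⟩)
    rw [← EReal.coe_sub]
    ring_nf
  simpa [hval] using (hsub hb).2 f hf

lemma cstarOf_subset_iff [Nonempty S] (hA : IsSetAlg 𝓐) {xf₁ xf₂ : (S → V) → V}
    (hniv : IsNiveloidCE 𝓐 X u xf₁) :
    CstarOf 𝓐 X u xf₁ ⊆ CstarOf 𝓐 X u xf₂ ↔ ∀ f ∈ Acts 𝓐 X, u (xf₁ f) ≤ u (xf₂ f) :=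
  ⟨fun hsub _ hf => ce_le_of_cstarOf_subset hA hniv hsub hf, fun hle _ hc =>
    ⟨hc.1, fun f hf => (hc.2 f hf).trans (EReal.coe_le_coe_iff.2 (hle f hf))⟩⟩

lemma bstarOf_subset_iff [Nonempty S] (hA : IsSetAlg 𝓐) {xf₁ xf₂ : (S → V) → V}
    (hniv : IsNiveloidCE 𝓐 X u xf₂) :
    BstarOf 𝓐 X u xf₂ ⊆ BstarOf 𝓐 X u xf₁ ↔ ∀ f ∈ Acts 𝓐 X, u (xf₁ f) ≤ u (xf₂ f) :=
  ⟨fun hsub _ hf => ce_le_of_bstarOf_subset hA hniv hsub hf, fun hle _ hb =>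
    ⟨hb.1, fun f hf => (EReal.coe_le_coe_iff.2 (hle f hf)).trans (hb.2 f hf)⟩⟩

end CertaintyEquivalent

section CardinalEquivalence
variable {X : Set V} {u₁ u₂ : V → ℝ}

lemma CardEquiv.le_iff (h : CardEquiv X u₁ u₂) {x y : V} (hx : x ∈ X) (hy : y ∈ X) :
    u₂ x ≤ u₂ y ↔ u₁ x ≤ u₁ y := by
  obtain ⟨a, b, ha, hab⟩ := h
  rw [hab x hx, hab y hy, add_le_add_iff_right, mul_le_mul_iff_right₀ ha]

lemma IsNiveloidCE.of_cardEquiv {𝓐 : Set (Set S)} {xf : (S → V) → V}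
    (hniv : IsNiveloidCE 𝓐 X u₂ xf) (h : CardEquiv X u₁ u₂) (hxf : ∀ f ∈ Acts 𝓐 X, xf f ∈ X) :
    IsNiveloidCE 𝓐 X u₁ xf := by
  obtain ⟨a, b, ha, hab⟩ := h
  intro f hf g hg M hM
  have h₂ := hniv f hf g hg (a * M) fun s => by
    rw [hab _ (hg.1 s), hab _ (hf.1 s)]
    linarith [mul_le_mul_of_nonneg_left (hM s) ha.le]
  rw [hab _ (hxf g hg), hab _ (hxf f hf)] at h₂
  exact le_of_mul_le_mul_left (by linarith) ha

end CardinalEquivalence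

section AmbiguityAversion
variable [AddCommGroup V] [Module ℝ V] {X : Set V} {u₁ u₂ : V → ℝ}

/-- The points `(u₂ x, u₁ x)` are collinear: `y` has the same `u₂`-value as a mixture of `x` and
`z`, hence, `u₁` being a monotone function of `u₂`, also the same `u₁`-value. -/
lemma collinear_of_le_imp_le (hXc : Convex ℝ X) (hu₁ : IsNonconstAffine X u₁)
    (hu₂ : IsNonconstAffine X u₂) (hmono : ∀ x ∈ X, ∀ y ∈ X, u₂ y ≤ u₂ x → u₁ y ≤ u₁ x)
    {x y z : V} (hx : x ∈ X) (hy : y ∈ X) (hz : z ∈ X) (hxy : u₂ x ≤ u₂ y) (hyz : u₂ y ≤ u₂ z) :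
    (u₂ z - u₂ x) * (u₁ y - u₁ x) = (u₂ y - u₂ x) * (u₁ z - u₁ x) := by
  have hE : ∀ x ∈ X, ∀ y ∈ X, u₂ x = u₂ y → u₁ x = u₁ y := fun x hx y hy h =>
    le_antisymm (hmono y hy x hx h.le) (hmono x hx y hy h.ge)
  rcases (hxy.trans hyz).eq_or_lt with hxz | hxz
  · have hyx : u₂ y = u₂ x := le_antisymm (hyz.trans hxz.ge) hxy
    rw [hE y hy x hx hyx, hyx]
    ring
  set t := (u₂ y - u₂ x) / (u₂ z - u₂ x)
  have hpos : 0 < u₂ z - u₂ x := sub_pos.2 hxz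
  have ht : t ∈ Set.Icc (0 : ℝ) 1 :=
    ⟨div_nonneg (by linarith) hpos.le, div_le_one_of_le₀ (by linarith) hpos.le⟩
  have hmix : t • z + (1 - t) • x ∈ X := hXc hz hx ht.1 (by linarith [ht.2]) (by ring)
  have htdef : t * (u₂ z - u₂ x) = u₂ y - u₂ x := div_mul_cancel₀ _ hpos.ne'
  have h₂ : u₂ (t • z + (1 - t) • x) = u₂ y := by
    rw [hu₂.1 z hz x hx t ht]
    linear_combination htdef
  have h₁ : u₁ y = t * u₁ z + (1 - t) * u₁ x := by
    rw [← hu₁.1 z hz x hx t ht, hE _ hmix y hy h₂]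
  rw [h₁]
  linear_combination (u₁ z - u₁ x) * htdef

lemma cardEquiv_of_le_imp_le (hXc : Convex ℝ X) (hu₁ : IsNonconstAffine X u₁)
    (hu₂ : IsNonconstAffine X u₂) (hmono : ∀ x ∈ X, ∀ y ∈ X, u₂ y ≤ u₂ x → u₁ y ≤ u₁ x) :
    CardEquiv X u₁ u₂ := by
  obtain ⟨x₀, hx₀, y₀, hy₀, hlt₁⟩ : ∃ x₀ ∈ X, ∃ y₀ ∈ X, u₁ y₀ < u₁ x₀ := by
    obtain ⟨-, x, hx, y, hy, hne⟩ := hu₁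
    rcases hne.lt_or_gt with h | h
    exacts [⟨y, hy, x, hx, h⟩, ⟨x, hx, y, hy, h⟩]
  have hlt₂ : u₂ y₀ < u₂ x₀ := lt_of_not_ge fun h => (hmono y₀ hy₀ x₀ hx₀ h).not_gt hlt₁
  refine ⟨(u₂ x₀ - u₂ y₀) / (u₁ x₀ - u₁ y₀),
    u₂ y₀ - (u₂ x₀ - u₂ y₀) / (u₁ x₀ - u₁ y₀) * u₁ y₀,
    div_pos (by linarith) (by linarith), fun x hx => ?_⟩
  have h : (u₂ x - u₂ y₀) * (u₁ x₀ - u₁ y₀) = (u₂ x₀ - u₂ y₀) * (u₁ x - u₁ y₀) := by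
    rcases le_total (u₂ x) (u₂ y₀) with h₀ | h₀
    · linear_combination collinear_of_le_imp_le hXc hu₁ hu₂ hmono hx hy₀ hx₀ h₀ hlt₂.le
    rcases le_total (u₂ x) (u₂ x₀) with h₁ | h₁
    · linear_combination -collinear_of_le_imp_le hXc hu₁ hu₂ hmono hy₀ hx hx₀ h₀ h₁
    · linear_combination collinear_of_le_imp_le hXc hu₁ hu₂ hmono hy₀ hx₀ hx hlt₂.le h₁
  have hne : u₁ x₀ - u₁ y₀ ≠ 0 := by linarith
  field_simp
  linear_combination h

lemma moreAmbiguityAverse_iff {𝓐 : Set (Set S)} (hA : IsSetAlg 𝓐) (hXc : Convex ℝ X)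
    (hu₁ : IsNonconstAffine X u₁) (hu₂ : IsNonconstAffine X u₂)
    {R₁ R₂ : (S → V) → (S → V) → Prop} {xf₁ xf₂ : (S → V) → V}
    (hconst₁ : ∀ x ∈ X, ∀ y ∈ X, (R₁ (constAct x) (constAct y) ↔ u₁ y ≤ u₁ x))
    (hconst₂ : ∀ x ∈ X, ∀ y ∈ X, (R₂ (constAct x) (constAct y) ↔ u₂ y ≤ u₂ x))
    (hce₁ : ∀ f ∈ Acts 𝓐 X, ∀ x ∈ X, (R₁ (constAct x) f ↔ u₁ (xf₁ f) ≤ u₁ x))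
    (hce₂ : ∀ f ∈ Acts 𝓐 X, ∀ x ∈ X, (R₂ (constAct x) f ↔ u₂ (xf₂ f) ≤ u₂ x))
    (hxf₂ : ∀ f ∈ Acts 𝓐 X, xf₂ f ∈ X) :
    MoreAmbiguityAverse 𝓐 X R₁ R₂ ↔
      CardEquiv X u₁ u₂ ∧ ∀ f ∈ Acts 𝓐 X, u₁ (xf₁ f) ≤ u₁ (xf₂ f) := by
  constructor
  · intro hmaa
    refine ⟨cardEquiv_of_le_imp_le hXc hu₁ hu₂ fun x hx y hy h => ?_, fun f hf => ?_⟩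
    · exact (hconst₁ x hx y hy).1
        (hmaa _ (constAct_mem_Acts hA hy) x hx ((hconst₂ x hx y hy).2 h))
    · exact (hce₁ f hf _ (hxf₂ f hf)).1
        (hmaa f hf _ (hxf₂ f hf) ((hce₂ f hf _ (hxf₂ f hf)).2 le_rfl))
  · rintro ⟨hcard, hle⟩ f hf x hx h₂
    exact (hce₁ f hf x hx).2
      ((hle f hf).trans ((hcard.le_iff (hxf₂ f hf) hx).1 ((hce₂ f hf x hx).1 h₂)))

end AmbiguityAversion

theorem stmt17_general {S V : Type*} [Nonempty S] [AddCommGroup V] [Module ℝ V]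
    (𝓐 : Set (Set S)) (hA : IsSetAlg 𝓐)
    (X : Set V) (hXc : Convex ℝ X)
    (R₁ R₂ : (S → V) → (S → V) → Prop)
    (u₁ u₂ : V → ℝ) (hu₁ : IsNonconstAffine X u₁) (hu₂ : IsNonconstAffine X u₂)
    (hrep₁ : ∃ C ⊆ Cscr 𝓐, Grounded 𝓐 C ∧ MaxminAttained 𝓐 X u₁ C ∧
      MaxminRep 𝓐 X R₁ u₁ C)
    (hrep₂ : ∃ C ⊆ Cscr 𝓐, Grounded 𝓐 C ∧ MaxminAttained 𝓐 X u₂ C ∧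
      MaxminRep 𝓐 X R₂ u₂ C)
    (hconst₁ : ∀ x ∈ X, ∀ y ∈ X, (R₁ (constAct x) (constAct y) ↔ u₁ y ≤ u₁ x))
    (hconst₂ : ∀ x ∈ X, ∀ y ∈ X, (R₂ (constAct x) (constAct y) ↔ u₂ y ≤ u₂ x))
    (xf₁ xf₂ : (S → V) → V) (hxf₁ : IsCE 𝓐 X R₁ xf₁) (hxf₂ : IsCE 𝓐 X R₂ xf₂) :
    (MoreAmbiguityAverse 𝓐 X R₁ R₂ ↔
      (CardEquiv X u₁ u₂ ∧ CstarOf 𝓐 X u₁ xf₁ ⊆ CstarOf 𝓐 X u₁ xf₂)) ∧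
    (MoreAmbiguityAverse 𝓐 X R₁ R₂ ↔
      (CardEquiv X u₁ u₂ ∧ BstarOf 𝓐 X u₁ xf₂ ⊆ BstarOf 𝓐 X u₁ xf₁)) := by
  obtain ⟨C₁, -, hG₁, -, hrep₁⟩ := hrep₁
  obtain ⟨C₂, -, hG₂, -, hrep₂⟩ := hrep₂
  have hxX₂ : ∀ f ∈ Acts 𝓐 X, xf₂ f ∈ X := fun f hf => (hxf₂ f hf).1
  have hmaa := moreAmbiguityAverse_iff hA hXc hu₁ hu₂ hconst₁ hconst₂
    (fun _ hf _ hx => rel_constAct_iff hA hG₁ hrep₁ hxf₁ hf hx)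
    (fun _ hf _ hx => rel_constAct_iff hA hG₂ hrep₂ hxf₂ hf hx) hxX₂
  have hniv₁ := isNiveloidCE_of_maxminRep hA hG₁ hrep₁ hxf₁
  have hniv₂ := isNiveloidCE_of_maxminRep hA hG₂ hrep₂ hxf₂
  exact ⟨hmaa.trans (and_congr_right fun _ => (cstarOf_subset_iff hA hniv₁).symm),
    hmaa.trans (and_congr_right fun hcard =>
      (bstarOf_subset_iff hA (hniv₂.of_cardEquiv hcard hxX₂)).symm)⟩

theorem stmt17 {S V : Type*} [Nonempty S] [AddCommGroup V] [Module ℝ V]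
    (𝓐 : Set (Set S)) (hA : IsSetAlg 𝓐)
    (X : Set V) (hX : X.Nonempty) (hXc : Convex ℝ X)
    (R₁ R₂ : (S → V) → (S → V) → Prop)
    (h₁ : NiveloidalPref 𝓐 X R₁) (h₂ : NiveloidalPref 𝓐 X R₂)
    (u₁ u₂ : V → ℝ) (hu₁ : IsNonconstAffine X u₁) (hu₂ : IsNonconstAffine X u₂)
    (h0₁ : (0 : ℝ) ∈ interior (u₁ '' X)) (h0₂ : (0 : ℝ) ∈ interior (u₂ '' X))
    (hrep₁ : ∃ C ⊆ Cscr 𝓐, Grounded 𝓐 C ∧ MaxminAttained 𝓐 X u₁ C ∧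
      MaxminRep 𝓐 X R₁ u₁ C)
    (hrep₂ : ∃ C ⊆ Cscr 𝓐, Grounded 𝓐 C ∧ MaxminAttained 𝓐 X u₂ C ∧
      MaxminRep 𝓐 X R₂ u₂ C)
    (hconst₁ : ∀ x ∈ X, ∀ y ∈ X, (R₁ (constAct x) (constAct y) ↔ u₁ y ≤ u₁ x))
    (hconst₂ : ∀ x ∈ X, ∀ y ∈ X, (R₂ (constAct x) (constAct y) ↔ u₂ y ≤ u₂ x))
    (xf₁ xf₂ : (S → V) → V) (hxf₁ : IsCE 𝓐 X R₁ xf₁) (hxf₂ : IsCE 𝓐 X R₂ xf₂) :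
    (MoreAmbiguityAverse 𝓐 X R₁ R₂ ↔
      (CardEquiv X u₁ u₂ ∧ CstarOf 𝓐 X u₁ xf₁ ⊆ CstarOf 𝓐 X u₁ xf₂)) ∧
    (MoreAmbiguityAverse 𝓐 X R₁ R₂ ↔
      (CardEquiv X u₁ u₂ ∧ BstarOf 𝓐 X u₁ xf₂ ⊆ BstarOf 𝓐 X u₁ xf₁)) :=
  stmt17_general 𝓐 hA X hXc R₁ R₂ u₁ u₂ hu₁ hu₂ hrep₁ hrep₂ hconst₁ hconst₂ xf₁ xf₂ hxf₁ hxf₂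

end Paper
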